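/- arXiv:2202.03858 — 8 statements merged into one kernel-verified Lean document; each statement's English description precedes it below -/
import Mathlib

section
/- Let m, m0, m1 be positive integers, q ∈ ℝ^m, A0 an m0×m real matrix, d0 ∈ ℝ^{m0}, A1 an m1×m real matrix, and d1 ∈ ℝ^{m1}. Let P := {p ∈ ℝ^m : p_j ≥ 0 for all j, ∑_{j=1}^m p_j = 1, A0 p = d0, A1 p ≤ d1 componentwise}. Assume the Slater condition: there exists p̄ with p̄_j > 0 for all j, ∑_j p̄_j = 1, A0 p̄ = d0, and (A1 p̄)_i < (d1)_i for every i. Then the optimal values agree: inf_{p ∈ P} ⟨p, q⟩ = sup { min_{1≤j≤m} ( q + A0ᵀ v + A1ᵀ λ )_j − ⟨v, d0⟩ − ⟨λ, d1⟩ : v ∈ ℝ^{m0}, λ ∈ ℝ^{m1}, λ ≥ 0 componentwise }. -/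
/-!
For `t` below the primal value, the point `(d₀, d₁, t)` lies outside the convex set
`{(A₀ p, A₁ p + y, p ⬝ q + s) | p ∈ S, y ≥ 0, s ≥ 0}`, which is closed as the sum of a compact set
and a closed cone. A separating functional `(w₀, w₁, σ)` is nonnegative on the cone, so `w₁ ≥ 0`
and `σ ≥ 0`, and evaluating at a feasible point forces `σ > 0`. Dividing by `σ` gives multipliers
whose Lagrangian exceeds `t` on all of `S`; for `S` the simplex this holds at every vertex, which
says precisely that the dual objective exceeds `t`. The reverse inequality is weak duality.
-/

open Set Matrix
open scoped Pointwise

theorem LinearMap.apply_eq_dotProduct {ι R : Type*} [Fintype ι] [DecidableEq ι] [CommSemiring R]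
    (f : (ι → R) →ₗ[R] R) (x : ι → R) : f x = (fun i => f (Pi.single i 1)) ⬝ᵥ x := by
  conv_lhs => rw [← Finset.univ_sum_single x]
  simp only [map_sum, dotProduct, mul_comm _ (x _)]
  refine Finset.sum_congr rfl fun i _ => ?_
  rw [← smul_eq_mul, ← map_smul, ← Pi.single_smul', smul_eq_mul, mul_one]

theorem LinearMap.exists_apply_prod_eq_dotProduct {κ₀ κ₁ : Type*} [Fintype κ₀] [Fintype κ₁]
    (g : (κ₀ → ℝ) × (κ₁ → ℝ) × ℝ →ₗ[ℝ] ℝ) :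
    ∃ (w₀ : κ₀ → ℝ) (w₁ : κ₁ → ℝ) (σ : ℝ), ∀ x y r,
      g (x, y, r) = w₀ ⬝ᵥ x + w₁ ⬝ᵥ y + σ * r := by
  classical
  refine ⟨fun i => g (Pi.single i 1, 0, 0), fun i => g (0, Pi.single i 1, 0), g (0, 0, 1),
    fun x y r => ?_⟩
  have hsplit : ((x, y, r) : (κ₀ → ℝ) × (κ₁ → ℝ) × ℝ) =
      (x, 0, 0) + (0, y, 0) + r • (0, 0, 1) := by
    simp
  rw [hsplit, map_add, map_add, map_smul, smul_eq_mul, mul_comm r]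
  exact congrArg₂ (· + · + _) ((g ∘ₗ LinearMap.inl ℝ _ _).apply_eq_dotProduct x)
    ((g ∘ₗ LinearMap.inr ℝ _ _ ∘ₗ LinearMap.inl ℝ _ _).apply_eq_dotProduct y)

theorem nonneg_of_forall_lt_add_mul {a b c : ℝ} (h : ∀ r : ℝ, 0 ≤ r → c < a + r * b) :
    0 ≤ b := by
  by_contra! hb
  have hca : c < a := by simpa using h 0 le_rfl
  have := h ((a - c) / -b) (div_nonneg (by linarith) (by linarith))
  rw [div_mul_eq_mul_div, div_neg, mul_div_cancel_right₀ _ hb.ne] at this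
  linarith

section LagrangeDuality

variable {ι κ₀ κ₁ : Type*} [Fintype ι] [Fintype κ₀] [Fintype κ₁]
  {q : ι → ℝ} {A₀ : Matrix κ₀ ι ℝ} {d₀ : κ₀ → ℝ} {A₁ : Matrix κ₁ ι ℝ} {d₁ : κ₁ → ℝ}

theorem ciInf_le_dotProduct_of_mem_stdSimplex {c p : ι → ℝ} (hp : p ∈ stdSimplex ℝ ι) :
    ⨅ j, c j ≤ p ⬝ᵥ c :=
  calc ⨅ j, c j = ∑ j, p j * ⨅ j, c j := by rw [← Finset.sum_mul, hp.2, one_mul]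
    _ ≤ p ⬝ᵥ c := Finset.sum_le_sum fun j _ =>
      mul_le_mul_of_nonneg_left (ciInf_le (Finite.bddBelow_range c) j) (hp.1 j)

theorem exists_fritzJohn_multipliers {S : Set (ι → ℝ)} (hS : Convex ℝ S) (hS' : IsCompact S)
    (hSne : S.Nonempty) {t : ℝ} (ht : ∀ p ∈ S, A₀ *ᵥ p = d₀ → A₁ *ᵥ p ≤ d₁ → t < p ⬝ᵥ q) :
    ∃ (w₀ : κ₀ → ℝ) (w₁ : κ₁ → ℝ) (σ : ℝ), 0 ≤ w₁ ∧ 0 ≤ σ ∧ ∀ p ∈ S,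
      0 < σ * (p ⬝ᵥ q - t) + w₀ ⬝ᵥ (A₀ *ᵥ p - d₀) + w₁ ⬝ᵥ (A₁ *ᵥ p - d₁) := by
  let L : (ι → ℝ) →ₗ[ℝ] (κ₀ → ℝ) × (κ₁ → ℝ) × ℝ :=
    A₀.mulVecLin.prod (A₁.mulVecLin.prod ((dotProductBilin ℝ ℝ).flip q))
  have hL : ∀ p, L p = (A₀ *ᵥ p, A₁ *ᵥ p, p ⬝ᵥ q) := fun p => rfl
  let K : Set ((κ₀ → ℝ) × (κ₁ → ℝ) × ℝ) := {0} ×ˢ Ici 0 ×ˢ Ici 0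
  have hmemK : ∀ k₀ y s, (k₀, y, s) ∈ K ↔ k₀ = 0 ∧ 0 ≤ y ∧ 0 ≤ s := by simp [K]
  have hz : (d₀, d₁, t) ∉ L '' S + K := by
    rintro ⟨_, ⟨p, hp, rfl⟩, ⟨k₀, y, s⟩, ⟨rfl, hy, hs⟩, h⟩
    simp only [hL, Prod.mk_add_mk, add_zero, Prod.mk.injEq] at h
    obtain ⟨h₀, h₁, h₂⟩ := h
    refine (ht p hp h₀ (h₁ ▸ le_add_of_nonneg_right hy)).not_ge ?_
    linarith [mem_Ici.1 hs]
  obtain ⟨g, u, hgz, hgC⟩ := geometric_hahn_banach_point_closed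
    ((hS.linear_image L).add ((convex_singleton 0).prod ((convex_Ici 0).prod (convex_Ici 0))))
    ((isClosed_singleton.prod (isClosed_Ici.prod isClosed_Ici)).add_left_of_isCompact
      (hS'.image L.continuous_of_finiteDimensional)) hz
  have hLK : ∀ p ∈ S, ∀ k ∈ K, u < g (L p + k) := fun p hp k hk =>
    hgC _ (add_mem_add (mem_image_of_mem L hp) hk)
  obtain ⟨p₀, hp₀⟩ := hSne
  have hgK : ∀ k ∈ K, 0 ≤ g k := by
    rintro ⟨k₀, y, s⟩ hk
    obtain ⟨rfl, hy, hs⟩ := (hmemK _ _ _).1 hk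
    refine nonneg_of_forall_lt_add_mul (a := g (L p₀)) (c := u) fun r hr => ?_
    rw [← smul_eq_mul, ← map_smul, ← map_add]
    exact hLK p₀ hp₀ _ ((hmemK _ _ _).2 ⟨smul_zero r, smul_nonneg hr hy, mul_nonneg hr hs⟩)
  obtain ⟨w₀, w₁, σ, hg⟩ := g.toLinearMap.exists_apply_prod_eq_dotProduct
  simp only [ContinuousLinearMap.coe_coe] at hg
  classical
  refine ⟨w₀, w₁, σ, fun i => ?_, ?_, fun p hp => ?_⟩
  · simpa [hg] using hgK _ ((hmemK _ _ _).2 ⟨rfl, Pi.single_nonneg.2 zero_le_one, le_rfl⟩)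
  · simpa [hg] using hgK _ ((hmemK _ _ _).2 ⟨rfl, le_rfl, zero_le_one⟩)
  · have := hgz.trans (add_zero (L p) ▸ hLK p hp 0 ((hmemK 0 0 0).2 ⟨rfl, le_rfl, le_rfl⟩))
    rw [hL, hg, hg] at this
    simp only [dotProduct_sub]
    linarith

variable (q A₀ d₀ A₁ d₁) in
def lagrangian (p : ι → ℝ) (v : κ₀ → ℝ) (lam : κ₁ → ℝ) : ℝ :=
  p ⬝ᵥ q + v ⬝ᵥ (A₀ *ᵥ p - d₀) + lam ⬝ᵥ (A₁ *ᵥ p - d₁)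

variable (q A₀ d₀ A₁ d₁) in
/-- The minimum of `lagrangian q A₀ d₀ A₁ d₁ · v lam` over the probability simplex. -/
noncomputable def dualObjective (v : κ₀ → ℝ) (lam : κ₁ → ℝ) : ℝ :=
  (⨅ j, (q + A₀ᵀ *ᵥ v + A₁ᵀ *ᵥ lam) j) - v ⬝ᵥ d₀ - lam ⬝ᵥ d₁

theorem lagrangian_eq (p : ι → ℝ) (v : κ₀ → ℝ) (lam : κ₁ → ℝ) :
    lagrangian q A₀ d₀ A₁ d₁ p v lam =
      p ⬝ᵥ (q + A₀ᵀ *ᵥ v + A₁ᵀ *ᵥ lam) - v ⬝ᵥ d₀ - lam ⬝ᵥ d₁ := by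
  simp only [lagrangian, add_dotProduct, dotProduct_sub, dotProduct_mulVec, mulVec_transpose,
    dotProduct_comm p]
  ring

theorem exists_lagrange_multipliers {S : Set (ι → ℝ)} (hS : Convex ℝ S) (hS' : IsCompact S)
    {p₀ : ι → ℝ} (hp₀ : p₀ ∈ S) (h₀ : A₀ *ᵥ p₀ = d₀) (h₁ : A₁ *ᵥ p₀ ≤ d₁) {t : ℝ}
    (ht : ∀ p ∈ S, A₀ *ᵥ p = d₀ → A₁ *ᵥ p ≤ d₁ → t < p ⬝ᵥ q) :
    ∃ (v : κ₀ → ℝ) (lam : κ₁ → ℝ), 0 ≤ lam ∧ ∀ p ∈ S, t < lagrangian q A₀ d₀ A₁ d₁ p v lam := by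
  obtain ⟨w₀, w₁, σ, hw₁, hσ, hpos⟩ := exists_fritzJohn_multipliers hS hS' ⟨p₀, hp₀⟩ ht
  have hσ' : 0 < σ := by
    have hp₀pos := hpos p₀ hp₀
    have : w₁ ⬝ᵥ (A₁ *ᵥ p₀ - d₁) ≤ 0 := by
      simpa using dotProduct_le_dotProduct_of_nonneg_left (sub_nonpos.2 h₁) hw₁
    rw [h₀, sub_self, dotProduct_zero, add_zero] at hp₀pos
    refine hσ.lt_of_ne ?_
    rintro rfl
    linarith
  refine ⟨σ⁻¹ • w₀, σ⁻¹ • w₁, smul_nonneg (inv_nonneg.2 hσ) hw₁, fun p hp => ?_⟩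
  have hscale : lagrangian q A₀ d₀ A₁ d₁ p (σ⁻¹ • w₀) (σ⁻¹ • w₁) - t =
      σ⁻¹ * (σ * (p ⬝ᵥ q - t) + w₀ ⬝ᵥ (A₀ *ᵥ p - d₀) + w₁ ⬝ᵥ (A₁ *ᵥ p - d₁)) := by
    simp only [lagrangian, smul_dotProduct, smul_eq_mul]
    field_simp
    ring
  exact sub_pos.1 (hscale ▸ mul_pos (inv_pos.2 hσ') (hpos p hp))

theorem lagrangian_le_of_feasible {p : ι → ℝ} (h₀ : A₀ *ᵥ p = d₀) (h₁ : A₁ *ᵥ p ≤ d₁)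
    (v : κ₀ → ℝ) {lam : κ₁ → ℝ} (hlam : 0 ≤ lam) :
    lagrangian q A₀ d₀ A₁ d₁ p v lam ≤ p ⬝ᵥ q := by
  have : lam ⬝ᵥ (A₁ *ᵥ p - d₁) ≤ 0 := by
    simpa using dotProduct_le_dotProduct_of_nonneg_left (sub_nonpos.2 h₁) hlam
  simp only [lagrangian, h₀, sub_self, dotProduct_zero, add_zero]
  linarith

theorem dualObjective_le_lagrangian {p : ι → ℝ} (hp : p ∈ stdSimplex ℝ ι) (v : κ₀ → ℝ)
    (lam : κ₁ → ℝ) : dualObjective q A₀ d₀ A₁ d₁ v lam ≤ lagrangian q A₀ d₀ A₁ d₁ p v lam := by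
  rw [dualObjective, lagrangian_eq]
  gcongr
  exact ciInf_le_dotProduct_of_mem_stdSimplex hp

theorem lt_dualObjective_of_forall_lt_lagrangian [Nonempty ι] {v : κ₀ → ℝ} {lam : κ₁ → ℝ}
    {t : ℝ} (h : ∀ p ∈ stdSimplex ℝ ι, t < lagrangian q A₀ d₀ A₁ d₁ p v lam) :
    t < dualObjective q A₀ d₀ A₁ d₁ v lam := by
  classical
  obtain ⟨j, hj⟩ := exists_eq_ciInf_of_finite (f := q + A₀ᵀ *ᵥ v + A₁ᵀ *ᵥ lam)
  have hvertex := h _ (single_mem_stdSimplex ℝ j)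
  rwa [lagrangian_eq, single_one_dotProduct, hj] at hvertex

end LagrangeDuality

theorem robust_log_optimal_strong_duality_general
    (m m0 m1 : ℕ)
    (q : Fin m → ℝ)
    (A0 : Matrix (Fin m0) (Fin m) ℝ) (d0 : Fin m0 → ℝ)
    (A1 : Matrix (Fin m1) (Fin m) ℝ) (d1 : Fin m1 → ℝ)
    (slater : ∃ pbar : Fin m → ℝ,
      (∀ j, 0 < pbar j) ∧ (∑ j, pbar j) = 1 ∧
      A0.mulVec pbar = d0 ∧ (∀ i, A1.mulVec pbar i < d1 i)) :
    sInf {y : ℝ | ∃ p : Fin m → ℝ,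
        (∀ j, 0 ≤ p j) ∧ (∑ j, p j) = 1 ∧
        A0.mulVec p = d0 ∧ (∀ i, A1.mulVec p i ≤ d1 i) ∧
        y = ∑ j, p j * q j}
      =
    sSup {y : ℝ | ∃ (v : Fin m0 → ℝ) (lam : Fin m1 → ℝ),
        (∀ i, 0 ≤ lam i) ∧
        y = (⨅ j : Fin m, (q j + A0.transpose.mulVec v j + A1.transpose.mulVec lam j))
              - (∑ i, v i * d0 i) - (∑ i, lam i * d1 i)} := by
  obtain ⟨pbar, hpos, hsum, heq, hlt⟩ := slater
  have hpbar : pbar ∈ stdSimplex ℝ (Fin m) := ⟨fun j => (hpos j).le, hsum⟩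
  have : Nonempty (Fin m) :=
    Finset.univ_nonempty_iff.1 (Finset.nonempty_of_sum_ne_zero (hsum ▸ one_ne_zero))
  refine (csSup_eq_of_forall_le_of_forall_lt_exists_gt ?_ ?_ ?_).symm
  · exact ⟨_, 0, 0, fun _ => le_rfl, rfl⟩
  · rintro _ ⟨v, lam, hlam, rfl⟩
    refine le_csInf ⟨_, pbar, hpbar.1, hsum, heq, fun i => (hlt i).le, rfl⟩ ?_
    rintro _ ⟨p, hp₀, hp₁, h₀, h₁, rfl⟩
    exact (dualObjective_le_lagrangian ⟨hp₀, hp₁⟩ v lam).trans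
      (lagrangian_le_of_feasible h₀ h₁ v hlam)
  · intro t ht
    have hprimal : ∀ p ∈ stdSimplex ℝ (Fin m), A0 *ᵥ p = d0 → A1 *ᵥ p ≤ d1 → t < p ⬝ᵥ q := by
      refine fun p hp h₀ h₁ => ht.trans_le (csInf_le ⟨⨅ j, q j, ?_⟩ ⟨p, hp.1, hp.2, h₀, h₁, rfl⟩)
      rintro _ ⟨p', hp₀, hp₁, -, -, rfl⟩
      exact ciInf_le_dotProduct_of_mem_stdSimplex ⟨hp₀, hp₁⟩
    obtain ⟨v, lam, hlam, hL⟩ := exists_lagrange_multipliers (convex_stdSimplex ℝ _)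
      (isCompact_stdSimplex ℝ _) hpbar heq (fun i => (hlt i).le) hprimal
    exact ⟨_, ⟨v, lam, hlam, rfl⟩, lt_dualObjective_of_forall_lt_lagrangian hL⟩

/-- Strong LP duality for the worst-case expected log-growth problem over a
polyhedral ambiguity set, under a Slater condition. -/
theorem robust_log_optimal_strong_duality
    (m m0 m1 : ℕ) (hm : 0 < m) (hm0 : 0 < m0) (hm1 : 0 < m1)
    (q : Fin m → ℝ)
    (A0 : Matrix (Fin m0) (Fin m) ℝ) (d0 : Fin m0 → ℝ)
    (A1 : Matrix (Fin m1) (Fin m) ℝ) (d1 : Fin m1 → ℝ)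
    (slater : ∃ pbar : Fin m → ℝ,
      (∀ j, 0 < pbar j) ∧ (∑ j, pbar j) = 1 ∧
      A0.mulVec pbar = d0 ∧ (∀ i, A1.mulVec pbar i < d1 i)) :
    sInf {y : ℝ | ∃ p : Fin m → ℝ,
        (∀ j, 0 ≤ p j) ∧ (∑ j, p j) = 1 ∧
        A0.mulVec p = d0 ∧ (∀ i, A1.mulVec p i ≤ d1 i) ∧
        y = ∑ j, p j * q j}
      =
    sSup {y : ℝ | ∃ (v : Fin m0 → ℝ) (lam : Fin m1 → ℝ),
        (∀ i, 0 ≤ lam i) ∧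
        y = (⨅ j : Fin m, (q j + A0.transpose.mulVec v j + A1.transpose.mulVec lam j))
              - (∑ i, v i * d0 i) - (∑ i, lam i * d1 i)} :=
  robust_log_optimal_strong_duality_general m m0 m1 q A0 d0 A1 d1 slater
end

section
/- Fix a real number x₀ > −1 and for x > x₀ define e₁(x) := ((1+x)/(x−x₀))·log((1+x)/(1+x₀)) − log( ((1+x)/(x−x₀))·log((1+x)/(1+x₀)) ) − 1. Then for every x > x₀ the two-sided bound − log((1+x)/(1+x₀)) ≤ e₁(x) ≤ (1+x)/(1+x₀) − 1 holds. -/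
/-! With `a = 1 + x₀`, `b = 1 + x` and `t = b / (b - a) * log (b / a)`, the error is
`e₁(x) = t - log t - 1`. The elementary bounds `(b - a) / b ≤ log (b / a) ≤ (b - a) / a` give
`1 ≤ t ≤ b / a`. Now `log t ≤ t - 1` makes the error nonnegative, hence at least `-log (b / a) ≤ 0`,
and `log t ≥ 0` bounds it by `t - 1 ≤ b / a - 1`. -/

namespace Real

variable {a b : ℝ}

lemma sub_div_le_log_div (ha : 0 < a) (hb : 0 < b) : (b - a) / b ≤ log (b / a) := by
  have h := one_sub_inv_le_log_of_pos (div_pos hb ha)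
  rwa [inv_div, one_sub_div hb.ne'] at h

lemma log_div_le_sub_div (ha : 0 < a) (hb : 0 < b) : log (b / a) ≤ (b - a) / a := by
  have h := log_le_sub_one_of_pos (div_pos hb ha)
  rwa [div_sub_one ha.ne'] at h

lemma one_le_div_sub_mul_log_div (ha : 0 < a) (hab : a < b) : 1 ≤ b / (b - a) * log (b / a) := by
  have hb : 0 < b := ha.trans hab
  calc 1 = b / (b - a) * ((b - a) / b) := by field_simp [(sub_pos.2 hab).ne']
    _ ≤ b / (b - a) * log (b / a) := by
      gcongr
      exact sub_div_le_log_div ha hb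

lemma div_sub_mul_log_div_le (ha : 0 < a) (hab : a < b) : b / (b - a) * log (b / a) ≤ b / a := by
  have hb : 0 < b := ha.trans hab
  calc b / (b - a) * log (b / a) ≤ b / (b - a) * ((b - a) / a) := by
        gcongr
        exact log_div_le_sub_div ha hb
    _ = b / a := by field_simp [(sub_pos.2 hab).ne']

end Real

/-- Two-sided bound on the hyperplane-approximation error:
`−log((1+x)/(1+x₀)) ≤ e₁(x) ≤ (1+x)/(1+x₀) − 1` for every `x > x₀ > −1`. -/
theorem approx_error_bounds (x₀ : ℝ) (hx₀ : -1 < x₀) (x : ℝ) (hx : x₀ < x) :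
    - Real.log ((1 + x) / (1 + x₀))
      ≤ ((1 + x) / (x - x₀)) * Real.log ((1 + x) / (1 + x₀))
          - Real.log (((1 + x) / (x - x₀)) * Real.log ((1 + x) / (1 + x₀))) - 1
    ∧ ((1 + x) / (x - x₀)) * Real.log ((1 + x) / (1 + x₀))
          - Real.log (((1 + x) / (x - x₀)) * Real.log ((1 + x) / (1 + x₀))) - 1
        ≤ (1 + x) / (1 + x₀) - 1 := by
  have ha : (0 : ℝ) < 1 + x₀ := by linarith
  have hab : 1 + x₀ < 1 + x := by linarith
  have hsub : x - x₀ = (1 + x) - (1 + x₀) := by ring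
  rw [hsub]
  set t := (1 + x) / ((1 + x) - (1 + x₀)) * Real.log ((1 + x) / (1 + x₀))
  have ht_one : 1 ≤ t := Real.one_le_div_sub_mul_log_div ha hab
  have ht_le : t ≤ (1 + x) / (1 + x₀) := Real.div_sub_mul_log_div_le ha hab
  have hlog_ratio : 0 ≤ Real.log ((1 + x) / (1 + x₀)) :=
    Real.log_nonneg ((one_le_div ha).2 hab.le)
  have hlog_t : Real.log t ≤ t - 1 := Real.log_le_sub_one_of_pos (by linarith)
  have hlog_t_nonneg : 0 ≤ Real.log t := Real.log_nonneg ht_one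
  constructor <;> linarith
end

section
/- Fix a real number x₀ > −1 and for x > x₀ define e₁(x) := ((1+x)/(x−x₀))·log((1+x)/(1+x₀)) − log( ((1+x)/(x−x₀))·log((1+x)/(1+x₀)) ) − 1. Then e₁ is strictly increasing on the interval (x₀, ∞); that is, for all x, y with x₀ < x < y one has e₁(x) < e₁(y). -/
/-!
With `u = (1 + x) / (1 + x₀)`, the quantity inside the logarithm is `u log u / (u - 1)`, the slope
of the secant of the strictly convex function `u ↦ u log u` between `1` and `u`. It is therefore
strictly increasing in `u`, and it exceeds `1`; since `t ↦ t - log t` is strictly increasing on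
`[1, ∞)`, so is the composite.
-/

open Real Set

theorem strictMonoOn_mul_log_div_sub_one :
    StrictMonoOn (fun u : ℝ => u * log u / (u - 1)) (Ioi 1) := by
  intro u hu v hv huv
  have hu₀ : u ∈ Ici (0 : ℝ) := mem_Ici.2 (zero_lt_one.trans hu).le
  have hv₀ : v ∈ Ici (0 : ℝ) := mem_Ici.2 (zero_lt_one.trans hv).le
  simpa using strictConvexOn_mul_log.secant_strict_mono (a := 1) (by simp) hu₀ hv₀
    hu.ne' hv.ne' huv

theorem one_lt_mul_log_div_sub_one {u : ℝ} (hu : 1 < u) : 1 < u * log u / (u - 1) := by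
  have hu₀ : 0 < u := zero_lt_one.trans hu
  have hlog : log u⁻¹ < u⁻¹ - 1 :=
    log_lt_sub_one_of_pos (inv_pos.2 hu₀) (inv_ne_one.2 hu.ne')
  have hmul := mul_lt_mul_of_pos_left hlog hu₀
  rw [log_inv, mul_sub, mul_inv_cancel₀ hu₀.ne'] at hmul
  rw [lt_div_iff₀ (sub_pos.2 hu)]
  linarith

theorem strictMonoOn_sub_log : StrictMonoOn (fun t : ℝ => t - log t) (Ici 1) := by
  intro s hs t _ hst
  have hs₀ : 0 < s := zero_lt_one.trans_le hs
  have hlog : log (t / s) < t / s - 1 :=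
    log_lt_sub_one_of_pos (div_pos (hs₀.trans hst) hs₀)
      (fun h => hst.ne' ((div_eq_one_iff_eq hs₀.ne').1 h))
  have hdiv : t / s - 1 ≤ t - s := by
    rw [div_sub_one hs₀.ne', div_le_iff₀ hs₀]
    nlinarith [mem_Ici.1 hs]
  rw [log_div (hs₀.trans hst).ne' hs₀.ne'] at hlog
  simp only
  linarith

theorem div_sub_mul_log_div_eq {a b : ℝ} (ha : a ≠ 0) (hab : b - a ≠ 0) :
    b / (b - a) * log (b / a) = b / a * log (b / a) / (b / a - 1) := by
  rw [div_sub_one ha]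
  field_simp

/-- The hyperplane-approximation error `e₁` is strictly increasing on `(x₀, ∞)`. -/
theorem approx_error_strictMono (x₀ : ℝ) (hx₀ : -1 < x₀) :
    StrictMonoOn (fun x : ℝ =>
        ((1 + x) / (x - x₀)) * Real.log ((1 + x) / (1 + x₀))
          - Real.log (((1 + x) / (x - x₀)) * Real.log ((1 + x) / (1 + x₀))) - 1)
      (Set.Ioi x₀) := by
  intro x hx y hy hxy
  have h₀ : 0 < 1 + x₀ := by linarith
  have hu : ∀ z ∈ Ioi x₀, 1 < (1 + z) / (1 + x₀) := fun z hz =>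
    (one_lt_div h₀).2 (by linarith [mem_Ioi.1 hz])
  have hsecant := strictMonoOn_mul_log_div_sub_one (hu x hx) (hu y hy)
    (div_lt_div_of_pos_right (by linarith) h₀)
  have hmono := strictMonoOn_sub_log (one_lt_mul_log_div_sub_one (hu x hx)).le
    (one_lt_mul_log_div_sub_one (hu y hy)).le hsecant
  have hx' : (1 + x) - (1 + x₀) ≠ 0 := by linarith [mem_Ioi.1 hx]
  have hy' : (1 + y) - (1 + x₀) ≠ 0 := by linarith [mem_Ioi.1 hy]
  simp only [← add_sub_add_left_eq_sub x x₀ 1, ← add_sub_add_left_eq_sub y x₀ 1,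
    div_sub_mul_log_div_eq h₀.ne' hx', div_sub_mul_log_div_eq h₀.ne' hy'] at hmono ⊢
  linarith
end

section
/- Let ε > 0. Let β > 1 satisfy β − log β − 1 = ε, and let α > 0 satisfy ((1+α)/α)·log(1+α) = β. Let xᵢ > −1 be any real number and set x_{i+1} := (1 + α)·xᵢ + α. Then x_{i+1} > xᵢ and e(xᵢ, x_{i+1}) = ε. -/
/-- The hyperplane-approximation error between tangency points `a < x` (with `a > −1`). -/
noncomputable def hyperErr (a x : ℝ) : ℝ :=
  ((1 + x) / (x - a)) * Real.log ((1 + x) / (1 + a))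
    - Real.log (((1 + x) / (x - a)) * Real.log ((1 + x) / (1 + a))) - 1

/-- Iterative formula for the successive partition point: if `β > 1` solves
`β − log β − 1 = ε` and `α > 0` solves `((1+α)/α)·log(1+α) = β`, then
`x_{i+1} = (1+α)·xᵢ + α` satisfies `x_{i+1} > xᵢ` and `e(xᵢ, x_{i+1}) = ε`. -/
theorem successive_partition_point
    (ε β α xi : ℝ) (hε : 0 < ε) (hβ : 1 < β)
    (hβeq : β - Real.log β - 1 = ε)
    (hα : 0 < α) (hαeq : ((1 + α) / α) * Real.log (1 + α) = β)
    (hxi : -1 < xi) :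
    xi < (1 + α) * xi + α ∧ hyperErr xi ((1 + α) * xi + α) = ε := by
  have h1 : 0 < 1 + xi := by linarith
  constructor
  · nlinarith
  · unfold hyperErr
    have h2 : (1 + ((1 + α) * xi + α)) = (1 + α) * (1 + xi) := by ring
    have h3 : ((1 + α) * xi + α - xi) = α * (1 + xi) := by ring
    rw [h2, h3]
    have h4 : (1 + α) * (1 + xi) / (α * (1 + xi)) = (1 + α) / α := by
      rw [mul_div_mul_right _ _ (ne_of_gt h1)]
    have h5 : (1 + α) * (1 + xi) / (1 + xi) = 1 + α := by
      field_simp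
    rw [h4, h5, hαeq, ← hβeq]
end

section
/- Let ε > 0 and let a, b be real numbers with −1 < a < b. Suppose x₀, x₁, …, x_M is a finite strictly increasing sequence with x₀ = a, e(x_{i−1}, x_i) = ε for every i = 1, …, M, and x_{M−1} < b ≤ x_M (the greedy partition generated by the algorithm). Then for every finite strictly increasing sequence z₀, z₁, …, z_L with z₀ = a, z_L = b, and e(z_{j−1}, z_j) ≤ ε for every j = 1, …, L, one has L ≥ M. In other words, the greedy partition uses the minimum possible number of supporting hyperplanes among all partitions of [a, b] whose consecutive approximation errors do not exceed ε. -/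
/-!
The error `e(a, x)` depends only on the ratio `r = (1 + x) / (1 + a)`: it is `g (h r)` with
`h t = t log t / (t - 1)` and `g u = u - log u - 1`, where `h` is increasing on `(1, ∞)` with
values above `1` and `g` is increasing on `[1, ∞)`. Hence `e(a, x)` increases with `x` and
decreases with `a`. By induction, the `j`-th point of any partition with errors at most `ε`
stays at or below the `j`-th greedy point: if it overtook it, its step would start no higher
and end strictly higher, so its error would exceed `ε`. So `L < M` would give
`b = z L ≤ x L ≤ x (M - 1) < b`.
-/

open Real Set

noncomputable def hyperErrInner (t : ℝ) : ℝ := t * log t / (t - 1)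

noncomputable def hyperErrOuter (u : ℝ) : ℝ := u - log u - 1

lemma hyperErr_eq_hyperErrOuter_hyperErrInner {a x : ℝ} (ha : -1 < a) (hax : a < x) :
    hyperErr a x = hyperErrOuter (hyperErrInner ((1 + x) / (1 + a))) := by
  have h1a : 1 + a ≠ 0 := by linarith
  have hxa : x - a ≠ 0 := by linarith
  have hratio : (1 + x) / (1 + a) - 1 = (x - a) / (1 + a) := by field_simp; ring
  rw [hyperErr, hyperErrOuter, hyperErrInner, hratio]
  field_simp

lemma one_lt_hyperErrInner {t : ℝ} (ht : 1 < t) : 1 < hyperErrInner t := by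
  have hlog : 1 - t⁻¹ < log t := by
    have := log_lt_sub_one_of_pos (inv_pos.2 (by linarith : (0 : ℝ) < t)) (inv_ne_one.2 ht.ne')
    rw [log_inv] at this
    linarith
  rw [hyperErrInner, one_lt_div (by linarith)]
  calc t - 1 = t * (1 - t⁻¹) := by field_simp
    _ < t * log t := by gcongr

lemma hasDerivAt_hyperErrInner {t : ℝ} (ht : 1 < t) :
    HasDerivAt hyperErrInner ((t - 1 - log t) / (t - 1) ^ 2) t := by
  have ht0 : t ≠ 0 := by linarith
  have ht1 : t - 1 ≠ 0 := by linarith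
  refine (((hasDerivAt_id t).mul (hasDerivAt_log ht0)).div
    ((hasDerivAt_id t).sub_const 1) ht1).congr_deriv ?_
  simp only [Pi.mul_apply, id]
  field_simp
  ring

lemma strictMonoOn_hyperErrInner : StrictMonoOn hyperErrInner (Ioi 1) := by
  refine strictMonoOn_of_deriv_pos (convex_Ioi 1)
    (fun t ht => (hasDerivAt_hyperErrInner ht).continuousAt.continuousWithinAt) fun t ht => ?_
  rw [interior_Ioi] at ht
  have ht' : (1 : ℝ) < t := ht
  rw [(hasDerivAt_hyperErrInner ht').deriv]
  have := log_lt_sub_one_of_pos (by linarith) ht'.ne'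
  exact div_pos (by linarith) (by nlinarith)

lemma strictMonoOn_hyperErrOuter : StrictMonoOn hyperErrOuter (Ici 1) := by
  intro u (hu : 1 ≤ u) v (hv : 1 ≤ v) huv
  have hu0 : 0 < u := by linarith
  have hlog : log (v / u) < v / u - 1 :=
    log_lt_sub_one_of_pos (by positivity) (by rw [Ne, div_eq_one_iff_eq hu0.ne']; exact huv.ne')
  have hvu : v / u - 1 ≤ v - u := by
    rw [div_sub_one hu0.ne', div_le_iff₀ hu0]; nlinarith
  rw [log_div (by linarith) hu0.ne'] at hlog
  simp only [hyperErrOuter]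
  linarith

lemma hyperErr_lt_hyperErr_of_ratio_lt {a x a' x' : ℝ} (ha : -1 < a) (hax : a < x)
    (ha' : -1 < a') (hax' : a' < x') (h : (1 + x) / (1 + a) < (1 + x') / (1 + a')) :
    hyperErr a x < hyperErr a' x' := by
  have hr : 1 < (1 + x) / (1 + a) := by rw [one_lt_div (by linarith)]; linarith
  have hr' : 1 < (1 + x') / (1 + a') := by rw [one_lt_div (by linarith)]; linarith
  rw [hyperErr_eq_hyperErrOuter_hyperErrInner ha hax,
    hyperErr_eq_hyperErrOuter_hyperErrInner ha' hax']
  exact strictMonoOn_hyperErrOuter (one_lt_hyperErrInner hr).le (one_lt_hyperErrInner hr').le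
    (strictMonoOn_hyperErrInner hr hr' h)

lemma le_of_hyperErr_le_hyperErr {z z' x x' : ℝ} (hz : -1 < z) (hzx : z ≤ x) (hzz' : z < z')
    (hxx' : x < x') (herr : hyperErr z z' ≤ hyperErr x x') : z' ≤ x' := by
  by_contra! hx'z'
  have h1z : 0 < 1 + z := by linarith
  have hratio : (1 + x') / (1 + x) < (1 + z') / (1 + z) :=
    calc (1 + x') / (1 + x) ≤ (1 + x') / (1 + z) := by gcongr; linarith
      _ < (1 + z') / (1 + z) := by gcongr
  exact herr.not_gt (hyperErr_lt_hyperErr_of_ratio_lt (by linarith) hxx' hz hzz' hratio)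

lemma neg_one_lt_and_le_of_forall_hyperErr_le {x z : ℕ → ℝ} {n : ℕ} (hz0 : -1 < z 0)
    (hzx0 : z 0 ≤ x 0) (hx : ∀ i < n, x i < x (i + 1)) (hz : ∀ i < n, z i < z (i + 1))
    (herr : ∀ i < n, hyperErr (z i) (z (i + 1)) ≤ hyperErr (x i) (x (i + 1))) :
    -1 < z n ∧ z n ≤ x n := by
  induction n with
  | zero => exact ⟨hz0, hzx0⟩
  | succ n ih =>
    obtain ⟨hzn, hzxn⟩ := ih (fun i hi => hx i (by omega)) (fun i hi => hz i (by omega))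
      (fun i hi => herr i (by omega))
    exact ⟨hzn.trans (hz n n.lt_succ_self),
      le_of_hyperErr_le_hyperErr hzn hzxn (hz n n.lt_succ_self) (hx n n.lt_succ_self)
        (herr n n.lt_succ_self)⟩

theorem greedy_partition_optimal_general
    (ε a b : ℝ) (ha : -1 < a)
    (M : ℕ) (x : ℕ → ℝ)
    (hx0 : x 0 = a)
    (hxmono : ∀ i < M, x i < x (i + 1))
    (hxerr : ∀ i < M, hyperErr (x i) (x (i + 1)) = ε)
    (hxb1 : x (M - 1) < b)
    (L : ℕ) (z : ℕ → ℝ)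
    (hz0 : z 0 = a) (hzL : z L = b)
    (hzmono : ∀ j < L, z j < z (j + 1))
    (hzerr : ∀ j < L, hyperErr (z j) (z (j + 1)) ≤ ε) :
    M ≤ L := by
  by_contra! hLM
  have hzx : z L ≤ x L :=
    (neg_one_lt_and_le_of_forall_hyperErr_le (hz0 ▸ ha) (hz0.trans hx0.symm).le
      (fun i hi => hxmono i (hi.trans hLM)) hzmono
      (fun i hi => hxerr i (hi.trans hLM) ▸ hzerr i hi)).2
  have hxL : x L ≤ x (M - 1) :=
    (strictMonoOn_Iic_of_lt_succ hxmono).monotoneOn (mem_Iic.2 (by omega))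
      (mem_Iic.2 (M.sub_le 1)) (by omega)
  linarith

/-- Optimality of the greedy partition: the partition produced by the algorithm
(with consecutive errors exactly `ε`, stopping as soon as `b` is covered) uses the
minimum possible number of supporting hyperplanes among all partitions of `[a, b]`
whose consecutive approximation errors do not exceed `ε`. -/
theorem greedy_partition_optimal
    (ε a b : ℝ) (hε : 0 < ε) (ha : -1 < a) (hab : a < b)
    (M : ℕ) (hM : 0 < M) (x : ℕ → ℝ)
    (hx0 : x 0 = a)
    (hxmono : ∀ i < M, x i < x (i + 1))
    (hxerr : ∀ i < M, hyperErr (x i) (x (i + 1)) = ε)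
    (hxb1 : x (M - 1) < b) (hxb2 : b ≤ x M)
    (L : ℕ) (hL : 0 < L) (z : ℕ → ℝ)
    (hz0 : z 0 = a) (hzL : z L = b)
    (hzmono : ∀ j < L, z j < z (j + 1))
    (hzerr : ∀ j < L, hyperErr (z j) (z (j + 1)) ≤ ε) :
    M ≤ L :=
  greedy_partition_optimal_general ε a b ha M x hx0 hxmono hxerr hxb1 L z hz0 hzL hzmono hzerr
end

section
/- Let a, b be real numbers with −1 < a < b, and define the tangent lines of log(1+·) at a and b by h_a(x) := (x − a)/(1 + a) + log(1 + a) and h_b(x) := (x − b)/(1 + b) + log(1 + b). Then for every x ∈ [a, b], 0 ≤ min(h_a(x), h_b(x)) − log(1 + x) ≤ e(a, b), and the supremum over x ∈ [a, b] of min(h_a(x), h_b(x)) − log(1 + x) equals e(a, b), attained at the intersection point of the two tangent lines. -/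
open Real Set

noncomputable def logTangent (p x : ℝ) : ℝ := (x - p) / (1 + p) + log (1 + p)

noncomputable def logDefect (t : ℝ) : ℝ := t - 1 - log t

lemma logDefect_nonneg {t : ℝ} (ht : 0 < t) : 0 ≤ logDefect t := by
  unfold logDefect
  linarith [log_le_sub_one_of_pos ht]

lemma monotoneOn_logDefect : MonotoneOn logDefect (Ici 1) := by
  intro s (hs : 1 ≤ s) t _ hst
  have hs0 : 0 < s := by linarith
  have ht0 : 0 < t := by linarith
  have hlog : log (t / s) ≤ t / s - 1 := log_le_sub_one_of_pos (div_pos ht0 hs0)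
  have hratio : t / s - 1 ≤ t - s := by
    rw [div_sub_one hs0.ne', div_le_iff₀ hs0]
    nlinarith
  rw [log_div ht0.ne' hs0.ne'] at hlog
  unfold logDefect
  linarith

lemma antitoneOn_logDefect : AntitoneOn logDefect (Ioc 0 1) := by
  intro s ⟨hs0, _⟩ t ⟨_, ht⟩ hst
  have ht0 : 0 < t := by linarith
  have hlog : log (s / t) ≤ s / t - 1 := log_le_sub_one_of_pos (div_pos hs0 ht0)
  have hratio : s / t - 1 ≤ s - t := by
    rw [div_sub_one ht0.ne', div_le_iff₀ ht0]
    nlinarith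
  rw [log_div hs0.ne' ht0.ne'] at hlog
  unfold logDefect
  linarith

lemma logTangent_sub_log {p x : ℝ} (hp : -1 < p) (hx : -1 < x) :
    logTangent p x - log (1 + x) = logDefect ((1 + x) / (1 + p)) := by
  have hp' : 1 + p ≠ 0 := by linarith
  rw [logDefect, log_div (by linarith) hp', logTangent]
  field_simp
  ring

lemma log_le_logTangent {p x : ℝ} (hp : -1 < p) (hx : -1 < x) :
    log (1 + x) ≤ logTangent p x := by
  have := logTangent_sub_log hp hx ▸ logDefect_nonneg (div_pos (by linarith) (by linarith))
  linarith

/-- The ratio `(1 + x') / (1 + a)` at the crossing point `x'` of the tangents at `a` and `b`. -/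
noncomputable def crossingRatio (a b : ℝ) : ℝ := (1 + b) / (b - a) * log ((1 + b) / (1 + a))

noncomputable def crossing (a b : ℝ) : ℝ := (1 + a) * crossingRatio a b - 1

lemma hyperErr_eq_logDefect (a b : ℝ) : hyperErr a b = logDefect (crossingRatio a b) := by
  rw [hyperErr, logDefect, crossingRatio]
  ring

lemma one_add_crossing (a b : ℝ) : 1 + crossing a b = (1 + a) * crossingRatio a b := by
  rw [crossing]
  ring

lemma log_div_bounds {a b : ℝ} (ha : -1 < a) (hab : a < b) :
    b - a ≤ log ((1 + b) / (1 + a)) * (1 + b) ∧ log ((1 + b) / (1 + a)) * (1 + a) ≤ b - a := by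
  have hA : 0 < 1 + a := by linarith
  have hB : 0 < 1 + b := by linarith
  have hr : 0 < (1 + b) / (1 + a) := div_pos hB hA
  have hlow := one_sub_inv_le_log_of_pos hr
  have hhigh := log_le_sub_one_of_pos hr
  rw [inv_div, one_sub_div hB.ne', show 1 + b - (1 + a) = b - a by ring, div_le_iff₀ hB] at hlow
  rw [div_sub_one hA.ne', show 1 + b - (1 + a) = b - a by ring, le_div_iff₀ hA] at hhigh
  exact ⟨hlow, hhigh⟩

lemma one_le_crossingRatio {a b : ℝ} (ha : -1 < a) (hab : a < b) : 1 ≤ crossingRatio a b := by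
  rw [crossingRatio, div_mul_eq_mul_div, le_div_iff₀ (by linarith)]
  linarith [(log_div_bounds ha hab).1]

lemma mul_crossingRatio_le {a b : ℝ} (ha : -1 < a) (hab : a < b) :
    (1 + a) * crossingRatio a b ≤ 1 + b := by
  have hform : (1 + a) * crossingRatio a b
      = (1 + b) * (log ((1 + b) / (1 + a)) * (1 + a)) / (b - a) := by
    rw [crossingRatio]
    ring
  rw [hform, div_le_iff₀ (by linarith)]
  exact mul_le_mul_of_nonneg_left (log_div_bounds ha hab).2 (by linarith)

lemma crossing_mem_Icc {a b : ℝ} (ha : -1 < a) (hab : a < b) : crossing a b ∈ Icc a b := by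
  have hc1 := one_le_crossingRatio ha hab
  have hc2 := mul_crossingRatio_le ha hab
  rw [crossing]
  constructor <;> nlinarith

lemma logTangent_crossing {a b : ℝ} (ha : -1 < a) (hab : a < b) :
    logTangent a (crossing a b) = logTangent b (crossing a b) := by
  have hA : 1 + a ≠ 0 := by linarith
  have hB : 1 + b ≠ 0 := by linarith
  have hba : b - a ≠ 0 := by linarith
  have hlog : log (1 + b) = log (1 + a) + log ((1 + b) / (1 + a)) := by
    rw [log_div hB hA]
    ring
  rw [logTangent, logTangent, crossing, crossingRatio, hlog]
  field_simp
  ring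

lemma logTangent_sub_log_crossing {a b : ℝ} (ha : -1 < a) (hab : a < b) :
    logTangent a (crossing a b) - log (1 + crossing a b) = hyperErr a b := by
  have hA : (1 + a) ≠ 0 := by linarith
  rw [logTangent_sub_log ha (ha.trans_le (crossing_mem_Icc ha hab).1), one_add_crossing,
    mul_div_cancel_left₀ _ hA, hyperErr_eq_logDefect]

noncomputable def tangentMinGap (a b x : ℝ) : ℝ :=
  min (logTangent a x) (logTangent b x) - log (1 + x)

lemma tangentMinGap_nonneg {a b x : ℝ} (ha : -1 < a) (hab : a < b) (hx : -1 < x) :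
    0 ≤ tangentMinGap a b x :=
  sub_nonneg.2 (le_min (log_le_logTangent ha hx) (log_le_logTangent (ha.trans hab) hx))

lemma tangentMinGap_crossing {a b : ℝ} (ha : -1 < a) (hab : a < b) :
    tangentMinGap a b (crossing a b) = hyperErr a b := by
  rw [tangentMinGap, ← logTangent_crossing ha hab, min_self, logTangent_sub_log_crossing ha hab]

lemma tangentMinGap_le {a b x : ℝ} (ha : -1 < a) (hab : a < b) (hx : x ∈ Icc a b) :
    tangentMinGap a b x ≤ hyperErr a b := by
  obtain ⟨hax, hxb⟩ := hx
  have hx1 : -1 < x := by linarith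
  have hA : 0 < 1 + a := by linarith
  have hB : 0 < 1 + b := by linarith
  have hb : -1 < b := ha.trans hab
  obtain ⟨hx'a, hx'b⟩ := crossing_mem_Icc ha hab
  rcases le_total x (crossing a b) with hle | hge
  · calc tangentMinGap a b x ≤ logTangent a x - log (1 + x) := by
          rw [tangentMinGap]; gcongr; exact min_le_left _ _
      _ = logDefect ((1 + x) / (1 + a)) := logTangent_sub_log ha hx1
      _ ≤ logDefect (crossingRatio a b) := by
          refine monotoneOn_logDefect ?_ (one_le_crossingRatio ha hab) ?_
          · rw [mem_Ici, one_le_div hA]; linarith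
          · rw [div_le_iff₀ hA, mul_comm, ← one_add_crossing]; linarith
      _ = hyperErr a b := (hyperErr_eq_logDefect a b).symm
  · calc tangentMinGap a b x ≤ logTangent b x - log (1 + x) := by
          rw [tangentMinGap]; gcongr; exact min_le_right _ _
      _ = logDefect ((1 + x) / (1 + b)) := logTangent_sub_log hb hx1
      _ ≤ logDefect ((1 + crossing a b) / (1 + b)) := by
          refine antitoneOn_logDefect ⟨div_pos (by linarith) hB, ?_⟩ ⟨?_, ?_⟩ (by gcongr)
          · rw [div_le_one hB]; linarith
          · exact div_pos (by linarith) hB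
          · rw [div_le_one hB]; linarith
      _ = logTangent b (crossing a b) - log (1 + crossing a b) :=
          (logTangent_sub_log hb (by linarith)).symm
      _ = hyperErr a b := by
          rw [← logTangent_crossing ha hab, logTangent_sub_log_crossing ha hab]

lemma isGreatest_tangentMinGap {a b : ℝ} (ha : -1 < a) (hab : a < b) :
    IsGreatest (tangentMinGap a b '' Icc a b) (hyperErr a b) := by
  refine ⟨⟨crossing a b, crossing_mem_Icc ha hab, tangentMinGap_crossing ha hab⟩, ?_⟩
  rintro _ ⟨x, hx, rfl⟩
  exact tangentMinGap_le ha hab hx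

/-- On `[a, b]`, the pointwise minimum of the two tangent lines of `log(1+·)` at `a`
and `b` over-approximates `log(1+x)` with gap at most `e(a,b)`, and the supremum of
the gap equals `e(a,b)`, attained at the intersection point of the two tangents. -/
theorem tangent_min_gap
    (a b : ℝ) (ha : -1 < a) (hab : a < b) :
    (∀ x ∈ Set.Icc a b,
        0 ≤ min ((x - a) / (1 + a) + Real.log (1 + a))
              ((x - b) / (1 + b) + Real.log (1 + b)) - Real.log (1 + x)
      ∧ min ((x - a) / (1 + a) + Real.log (1 + a))
              ((x - b) / (1 + b) + Real.log (1 + b)) - Real.log (1 + x)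
          ≤ hyperErr a b)
    ∧ sSup ((fun x : ℝ =>
          min ((x - a) / (1 + a) + Real.log (1 + a))
              ((x - b) / (1 + b) + Real.log (1 + b)) - Real.log (1 + x)) ''
            Set.Icc a b) = hyperErr a b
    ∧ ∃ x' ∈ Set.Icc a b,
        (x' - a) / (1 + a) + Real.log (1 + a)
            = (x' - b) / (1 + b) + Real.log (1 + b)
        ∧ min ((x' - a) / (1 + a) + Real.log (1 + a))
              ((x' - b) / (1 + b) + Real.log (1 + b)) - Real.log (1 + x')
            = hyperErr a b :=
  ⟨fun _ hx => ⟨tangentMinGap_nonneg ha hab (ha.trans_le hx.1), tangentMinGap_le ha hab hx⟩,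
    (isGreatest_tangentMinGap ha hab).csSup_eq,
    crossing a b, crossing_mem_Icc ha hab, logTangent_crossing ha hab,
    tangentMinGap_crossing ha hab⟩
end

section
/- Let n, N be positive integers, let Ω be a nonempty finite set with weights p_ω ≥ 0 summing to 1, and for each ω ∈ Ω let x_ω(0), …, x_ω(N−1) ∈ ℝ^n. Let U := {K ∈ ℝ^n : 1 + ⟨K, x_ω(i)⟩ > 0 for all ω ∈ Ω and all i = 0, …, N−1}. Then U is convex and the function F(K) := ∑_{ω ∈ Ω} p_ω · min_{0 ≤ ℓ < k ≤ N} ∑_{i=ℓ}^{k−1} log(1 + ⟨K, x_ω(i)⟩) is concave on U. Moreover, for every δ ∈ (0, 1), the superlevel set D_δ := {K ∈ U : F(K) ≥ log(1 − δ)} is convex. -/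
/-!
Each log return `K ↦ log (1 + ⟨K, x_ω(i)⟩)` is concave on `U`, being `log` composed with an
affine map. Sums of concave functions over a window `[ℓ, k)` are concave, a minimum over the
finitely many windows is concave, and so is a nonnegative combination over `ω`. Superlevel sets
of a concave function are convex.
-/

open Finset Real

section
variable {𝕜 E β ι : Type*} [Semiring 𝕜] [PartialOrder 𝕜] [AddCommMonoid E] [SMul 𝕜 E]
  {s : Set E}

theorem ConcaveOn.finset_sum [AddCommMonoid β] [PartialOrder β] [IsOrderedAddMonoid β]
    [Module 𝕜 β] (hs : Convex 𝕜 s) {t : Finset ι} {f : ι → E → β}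
    (hf : ∀ i ∈ t, ConcaveOn 𝕜 s (f i)) :
    ConcaveOn 𝕜 s fun x => ∑ i ∈ t, f i x := by
  induction t using Finset.cons_induction with
  | empty => simpa using concaveOn_const 0 hs
  | cons i t hi ih =>
    simp only [sum_cons]
    exact (hf i (mem_cons_self i t)).add (ih fun j hj => hf j (mem_cons_of_mem hj))

theorem ConcaveOn.finset_inf' [AddCommMonoid β] [LinearOrder β] [IsOrderedAddMonoid β]
    [Module 𝕜 β] [PosSMulStrictMono 𝕜 β] {t : Finset ι} (ht : t.Nonempty) {f : ι → E → β}
    (hf : ∀ i ∈ t, ConcaveOn 𝕜 s (f i)) :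
    ConcaveOn 𝕜 s fun x => t.inf' ht fun i => f i x := by
  induction ht using Finset.Nonempty.cons_induction with
  | singleton i => simpa using hf i (mem_singleton_self i)
  | cons i t hi ht ih =>
    simp only [inf'_cons ht]
    exact (hf i (mem_cons_self i t)).inf (ih fun j hj => hf j (mem_cons_of_mem hj))

end

def windows (N : ℕ) : Finset (ℕ × ℕ) :=
  (range (N + 1) ×ˢ range (N + 1)).filter fun w => w.1 < w.2

theorem mem_windows {N : ℕ} {w : ℕ × ℕ} : w ∈ windows N ↔ w.1 < w.2 ∧ w.2 ≤ N := by
  simp only [windows, mem_filter, mem_product, mem_range]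
  omega

theorem windows_nonempty {N : ℕ} (hN : 0 < N) : (windows N).Nonempty :=
  ⟨(0, N), mem_windows.2 ⟨hN, le_rfl⟩⟩

-- For `N = 0` there is no window and this is the junk value `sInf ∅ = 0`.
noncomputable def minWindowSum (N : ℕ) (r : ℕ → ℝ) : ℝ :=
  sInf {y : ℝ | ∃ l k : ℕ, l < k ∧ k ≤ N ∧ y = ∑ i ∈ Ico l k, r i}

theorem minWindowSum_eq_inf' {N : ℕ} (hN : 0 < N) (r : ℕ → ℝ) :
    minWindowSum N r =
      (windows N).inf' (windows_nonempty hN) fun w => ∑ i ∈ Ico w.1 w.2, r i := by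
  rw [inf'_eq_csInf_image, minWindowSum]
  congr 1
  ext y
  simp only [Set.mem_ofPred_eq, Set.mem_image, mem_coe, mem_windows, Prod.exists]
  grind

theorem ConcaveOn.minWindowSum {E : Type*} [AddCommMonoid E] [Module ℝ E] {s : Set E}
    (hs : Convex ℝ s) {N : ℕ} (hN : 0 < N) {r : E → ℕ → ℝ}
    (hr : ∀ i < N, ConcaveOn ℝ s fun K => r K i) :
    ConcaveOn ℝ s fun K => minWindowSum N (r K) := by
  simp only [minWindowSum_eq_inf' hN]
  refine .finset_inf' _ fun w hw => .finset_sum hs fun i hi => hr i ?_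
  have := mem_windows.1 hw
  have := mem_Ico.1 hi
  omega

theorem concaveOn_log_one_add_sum_mul {ι : Type*} [Fintype ι] (v : ι → ℝ) :
    ConcaveOn ℝ {K : ι → ℝ | 0 < 1 + ∑ t, K t * v t} fun K => log (1 + ∑ t, K t * v t) := by
  let g : (ι → ℝ) →ᵃ[ℝ] ℝ :=
    AffineMap.const ℝ _ 1 + (Fintype.linearCombination ℝ v).toAffineMap
  have hg : ∀ K, g K = 1 + ∑ t, K t * v t := fun K => by
    simp [g, Fintype.linearCombination_apply]
  simpa [Function.comp_def, hg, Set.preimage] using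
    strictConcaveOn_log_Ioi.concaveOn.comp_affineMap g

theorem drawdown_surrogate_convex_general
    (n N : ℕ) (hN : 0 < N)
    (Ω : Type*) [Fintype Ω]
    (p : Ω → ℝ) (hp : ∀ ω, 0 ≤ p ω)
    (x : Ω → ℕ → Fin n → ℝ) :
    Convex ℝ {K : Fin n → ℝ | ∀ (ω : Ω) (i : ℕ), i < N →
        0 < 1 + ∑ t, K t * x ω i t}
    ∧ ConcaveOn ℝ {K : Fin n → ℝ | ∀ (ω : Ω) (i : ℕ), i < N →
        0 < 1 + ∑ t, K t * x ω i t}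
        (fun K => ∑ ω, p ω *
          sInf {y : ℝ | ∃ l k : ℕ, l < k ∧ k ≤ N ∧
            y = ∑ i ∈ Finset.Ico l k, Real.log (1 + ∑ t, K t * x ω i t)})
    ∧ ∀ δ : ℝ, 0 < δ → δ < 1 →
        Convex ℝ {K : Fin n → ℝ |
          (∀ (ω : Ω) (i : ℕ), i < N → 0 < 1 + ∑ t, K t * x ω i t)
          ∧ Real.log (1 - δ) ≤ ∑ ω, p ω *
              sInf {y : ℝ | ∃ l k : ℕ, l < k ∧ k ≤ N ∧
                y = ∑ i ∈ Finset.Ico l k, Real.log (1 + ∑ t, K t * x ω i t)}} := by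
  set U := {K : Fin n → ℝ | ∀ (ω : Ω) (i : ℕ), i < N → 0 < 1 + ∑ t, K t * x ω i t}
  have hU : Convex ℝ U := by
    simp only [U, Set.ofPred_forall]
    exact convex_iInter fun ω => convex_iInter fun i => convex_iInter fun _ =>
      (concaveOn_log_one_add_sum_mul (x ω i)).1
  have hlog : ∀ ω, ∀ i < N, ConcaveOn ℝ U fun K => log (1 + ∑ t, K t * x ω i t) :=
    fun ω i hi => (concaveOn_log_one_add_sum_mul (x ω i)).subset (fun K hK => hK ω i hi) hU
  have hF : ConcaveOn ℝ U fun K =>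
      ∑ ω, p ω * minWindowSum N fun i => log (1 + ∑ t, K t * x ω i t) :=
    .finset_sum hU fun ω _ => (ConcaveOn.minWindowSum hU hN (hlog ω)).smul (hp ω)
  exact ⟨hU, hF, fun δ _ _ => hF.convex_ge _⟩

/-- Convexity of the drawdown surrogate: the domain `U` is convex, the expected
log complementary drawdown `F` is concave on `U`, and for every `δ ∈ (0,1)` the
superlevel set `{K ∈ U : F(K) ≥ log(1 − δ)}` is convex. -/
theorem drawdown_surrogate_convex
    (n N : ℕ) (hn : 0 < n) (hN : 0 < N)
    (Ω : Type*) [Fintype Ω] [Nonempty Ω]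
    (p : Ω → ℝ) (hp : ∀ ω, 0 ≤ p ω) (hpsum : (∑ ω, p ω) = 1)
    (x : Ω → ℕ → Fin n → ℝ) :
    Convex ℝ {K : Fin n → ℝ | ∀ (ω : Ω) (i : ℕ), i < N →
        0 < 1 + ∑ t, K t * x ω i t}
    ∧ ConcaveOn ℝ {K : Fin n → ℝ | ∀ (ω : Ω) (i : ℕ), i < N →
        0 < 1 + ∑ t, K t * x ω i t}
        (fun K => ∑ ω, p ω *
          sInf {y : ℝ | ∃ l k : ℕ, l < k ∧ k ≤ N ∧
            y = ∑ i ∈ Finset.Ico l k, Real.log (1 + ∑ t, K t * x ω i t)})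
    ∧ ∀ δ : ℝ, 0 < δ → δ < 1 →
        Convex ℝ {K : Fin n → ℝ |
          (∀ (ω : Ω) (i : ℕ), i < N → 0 < 1 + ∑ t, K t * x ω i t)
          ∧ Real.log (1 - δ) ≤ ∑ ω, p ω *
              sInf {y : ℝ | ∃ l k : ℕ, l < k ∧ k ≤ N ∧
                y = ∑ i ∈ Finset.Ico l k, Real.log (1 + ∑ t, K t * x ω i t)}} :=
  drawdown_surrogate_convex_general n N hN Ω p hp x
end

section
/- Let a, x be real numbers with −1 < a < x and set α := (x − a)/(1 + a). Then α > 0 and ((1+x)/(x−a)) · log((1+x)/(1+a)) = ((1+α)/α) · log(1+α). Consequently, with β := ((1+α)/α)·log(1+α), the hyperplane-approximation error satisfies e(a, x) = β − log β − 1; in particular e(a, x) depends on (a, x) only through the ratio α = (x − a)/(1 + a). -/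
/-! Both quantities in `e(a, x)` are built from `(1 + x)/(1 + a) = 1 + α` and
`(1 + x)/(x − a) = (1 + α)/α`, so substituting these two identities makes `e(a, x)` a function
of `α` alone. -/

section RatioIdentities

variable {a x : ℝ}

lemma one_add_sub_div_one_add (ha : 1 + a ≠ 0) :
    1 + (x - a) / (1 + a) = (1 + x) / (1 + a) := by
  field_simp
  ring

lemma one_add_sub_div_one_add_div (ha : 1 + a ≠ 0) :
    (1 + (x - a) / (1 + a)) / ((x - a) / (1 + a)) = (1 + x) / (x - a) := by
  rw [one_add_sub_div_one_add ha, div_div_div_cancel_right₀ ha]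

lemma div_sub_mul_log_div_one_add (ha : 1 + a ≠ 0) :
    ((1 + x) / (x - a)) * Real.log ((1 + x) / (1 + a))
      = ((1 + (x - a) / (1 + a)) / ((x - a) / (1 + a)))
          * Real.log (1 + (x - a) / (1 + a)) := by
  rw [one_add_sub_div_one_add_div ha, one_add_sub_div_one_add ha]

end RatioIdentities

/-- Scale invariance of the hyperplane-approximation error: with
`α = (x − a)/(1 + a) > 0` and `β = ((1+α)/α)·log(1+α)`, one has
`((1+x)/(x−a))·log((1+x)/(1+a)) = β` and `e(a, x) = β − log β − 1`;
so `e(a, x)` depends on `(a, x)` only through the ratio `α`. -/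
theorem hyperErr_scale_invariance
    (a x : ℝ) (ha : -1 < a) (hax : a < x)
    (α : ℝ) (hα : α = (x - a) / (1 + a)) :
    0 < α
    ∧ ((1 + x) / (x - a)) * Real.log ((1 + x) / (1 + a))
        = ((1 + α) / α) * Real.log (1 + α)
    ∧ hyperErr a x
        = ((1 + α) / α) * Real.log (1 + α)
          - Real.log (((1 + α) / α) * Real.log (1 + α)) - 1 := by
  subst hα
  have hβ := div_sub_mul_log_div_one_add (x := x) (by linarith : 0 < 1 + a).ne'
  exact ⟨div_pos (by linarith) (by linarith), hβ, by rw [hyperErr, hβ]⟩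
end
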